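/- arXiv:0805.3072 — 2 statements merged into one kernel-verified Lean document; each statement's English description precedes it below -/
import Mathlib

section
/- Every n-dimensional (n ≥ 6) naturally graded quasi-filiform complex Zinbiel algebra of type A_(1) is isomorphic to the algebra KF_n^1 with basis e_1, …, e_n and products e_i∘e_j = C(i+j−1, j)·e_{i+j} for 2 ≤ i+j ≤ n−2, all other products of basis vectors being zero. -/
/-!
The grading forces `A_{k+1} = A_1 ∘ A_k`, so no `A_k` with `k ≤ n - 2` vanishes, and counting
dimensions (`dim A_1 = 3`, `dim A = n`) leaves `dim A_k = 1` for `2 ≤ k ≤ n - 2`. In coordinates of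
`A_2, A_3, A_4`, the Zinbiel identity in degrees 3 and 4 forces the product on `A_1` to be of rank
one: `x ∘ y = φ(x) φ(y) e ∘ e` for a functional `φ` and some `e ∈ A_1` with `φ(e) = 1`. The
two-dimensional kernel of `φ` on `A_1` then annihilates every left power `eᵏ = e ∘ (e ∘ ⋯ e)`, these
powers span `A_2, …, A_{n-2}`, and the Zinbiel identity together with Pascal's rule gives
`eⁱ ∘ eʲ = C(i+j-1, j) eⁱ⁺ʲ`. The powers `e¹, …, eⁿ⁻²` and a basis of the kernel form the basis.
-/

/-- A complex Zinbiel algebra structure on the module `A`: a bilinear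
multiplication satisfying `(x∘y)∘z = x∘(y∘z) + x∘(z∘y)`. -/
structure ZinbielStr (A : Type*) [AddCommGroup A] [Module ℂ A] where
  mul : A →ₗ[ℂ] A →ₗ[ℂ] A
  zinbiel : ∀ x y z : A, mul (mul x y) z = mul x (mul y z) + mul x (mul z y)

namespace ZinbielStr

variable {A : Type*} [AddCommGroup A] [Module ℂ A]

/-- `M.lcs k` is the term `A^k` of the lower central series for `k ≥ 1`
(`A^1 = A`, `A^{k+1} = span (A ∘ A^k)`), with the convention `M.lcs 0 = ⊤`. -/
def lcs (M : ZinbielStr A) : ℕ → Submodule ℂ A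
  | 0 => ⊤
  | 1 => ⊤
  | k + 2 => Submodule.span ℂ {z | ∃ a b, b ∈ lcs M (k + 1) ∧ z = M.mul a b}

/-- A Zinbiel algebra is nilpotent when some term of the lower central series vanishes. -/
def IsNilpotent (M : ZinbielStr A) : Prop := ∃ s, 1 ≤ s ∧ M.lcs s = ⊥

/-- `Ag` is a natural grading of `M` with parts `Ag 1, …, Ag t`:
the parts are independent, `A_i ∘ A_j ⊆ A_{i+j}` (with `A_k = 0` for `k > t` and `k = 0`),
and `A^k = A_k ⊕ A_{k+1} ⊕ ⋯ ⊕ A_t` for all `1 ≤ k ≤ t`. -/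
structure IsNaturalGrading (M : ZinbielStr A) (t : ℕ) (Ag : ℕ → Submodule ℂ A) : Prop where
  zero_deg : Ag 0 = ⊥
  high_deg : ∀ k, t < k → Ag k = ⊥
  indep : iSupIndep Ag
  mul_mem : ∀ i j x y, x ∈ Ag i → y ∈ Ag j → M.mul x y ∈ Ag (i + j)
  lcs_eq : ∀ k, 1 ≤ k → k ≤ t → M.lcs k = ⨆ j, ⨆ (_ : k ≤ j), Ag j

/-- An `n`-dimensional Zinbiel algebra is quasi-filiform if `A^{n-2} ≠ 0` and `A^{n-1} = 0`. -/
def IsQuasiFiliform (M : ZinbielStr A) (n : ℕ) : Prop :=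
  Module.finrank ℂ A = n ∧ M.lcs (n - 2) ≠ ⊥ ∧ M.lcs (n - 1) = ⊥


end ZinbielStr

open Module Submodule

namespace Submodule

variable {K V : Type*} [Field K] [AddCommGroup V] [Module K V]

theorem exists_coord_of_finrank_eq_one {W : Submodule K V} (hW : finrank K W = 1) :
    ∃ x ∈ W, ∃ ℓ : V →ₗ[K] K, ℓ x = 1 ∧ ∀ z ∈ W, z = ℓ z • x := by
  obtain ⟨⟨x, hxW⟩, hx0, hspan⟩ := finrank_eq_one_iff'.1 hW
  obtain ⟨ℓ, hℓ⟩ := Projective.exists_dual_eq_one K (x := x) (by simpa using hx0)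
  refine ⟨x, hxW, ℓ, hℓ, fun z hz => ?_⟩
  obtain ⟨c, hc⟩ := hspan ⟨z, hz⟩
  have hz : z = c • x := by simpa using congrArg Subtype.val hc.symm
  rw [hz, map_smul, hℓ, smul_eq_mul, mul_one]

theorem exists_le_span_of_apply_eq_one {W : Submodule K V} [FiniteDimensional K W] {m : ℕ}
    (hW : finrank K W = m + 1) {e : V} (he : e ∈ W) {φ : V →ₗ[K] K} (hφe : φ e = 1) :
    ∃ w : Fin m → V, (∀ i, w i ∈ W ∧ φ (w i) = 0) ∧ W ≤ span K {e} ⊔ span K (Set.range w) := by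
  set φW := φ ∘ₗ W.subtype
  have hrange : LinearMap.range φW = ⊤ :=
    eq_top_iff.2 fun c _ => ⟨c • ⟨e, he⟩, by simp [φW, hφe]⟩
  have hker : finrank K (LinearMap.ker φW) = m := by
    have := LinearMap.finrank_range_add_finrank_ker φW
    rw [hrange, finrank_top, finrank_self, hW] at this
    omega
  let b := finBasisOfFinrankEq K _ hker
  refine ⟨fun i => (b i : W), fun i => ⟨(b i : W).2, (b i).2⟩, fun x hx => ?_⟩
  have hu : (⟨x, hx⟩ - φ x • ⟨e, he⟩ : W) ∈ LinearMap.ker φW := by simp [φW, hφe]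
  have hsum := congrArg (fun u : LinearMap.ker φW => ((u : W) : V)) (b.sum_repr ⟨_, hu⟩)
  simp only [Submodule.coe_sum, Submodule.coe_smul, Submodule.coe_sub] at hsum
  rw [show x = φ x • e + (x - φ x • e) by abel, ← hsum]
  exact add_mem_sup (smul_mem _ _ (mem_span_singleton_self e))
    (sum_mem fun i _ => smul_mem _ _ (subset_span ⟨i, rfl⟩))

end Submodule

theorem iSupIndep.finrank_biSup_eq_sum {K V ι : Type*} [Field K] [AddCommGroup V] [Module K V]
    [FiniteDimensional K V] {p : ι → Submodule K V} (hp : iSupIndep p) (s : Finset ι) :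
    finrank K ↥(⨆ i ∈ s, p i) = ∑ i ∈ s, finrank K (p i) := by
  classical
  induction s using Finset.induction_on with
  | empty => simp
  | insert a s ha ih =>
    have hdisj : p a ⊓ ⨆ i ∈ s, p i = ⊥ := (hp.disjoint_biSup (y := ↑s) ha).eq_bot
    have h := Submodule.finrank_sup_add_finrank_inf_eq (p a) (⨆ i ∈ s, p i)
    rw [hdisj, finrank_bot, add_zero, ih] at h
    rw [Finset.iSup_insert, Finset.sum_insert ha, h]

namespace LinearMap

theorem forall_eq_zero_or_forall_eq_zero_of_mul_eq_zero {R V : Type*} [CommRing R]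
    [NoZeroDivisors R] [AddCommGroup V] [Module R V] {W : Submodule R V} {f g : V →ₗ[R] R}
    (h : ∀ x ∈ W, f x * g x = 0) : (∀ x ∈ W, f x = 0) ∨ (∀ x ∈ W, g x = 0) := by
  by_contra! hc
  obtain ⟨⟨x, hxW, hfx⟩, ⟨y, hyW, hgy⟩⟩ := hc
  have hgx : g x = 0 := (mul_eq_zero.1 (h x hxW)).resolve_left hfx
  have hfy : f y = 0 := (mul_eq_zero.1 (h y hyW)).resolve_right hgy
  have hxy := h (x + y) (W.add_mem hxW hyW)
  rw [map_add, map_add, hgx, hfy, add_zero, zero_add] at hxy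
  exact mul_ne_zero hfx hgy hxy

end LinearMap

/-- The hypotheses are the Zinbiel identity on `A₁ × A₁ × A₁` and on `A₁ × A₁ × A₂`, written in
coordinates: `x ∘ y = B x y • x₂`, `x ∘ x₂ = φ x • x₃`, `x₂ ∘ x = ψ x • x₃`, `x ∘ x₃ = φ' x • x₄`
and `x₂ ∘ x₂ = c • x₄`. -/
theorem exists_eq_mul_mul_of_relations {K V : Type*} [Field K] [NeZero (2 : K)] [AddCommGroup V]
    [Module K V] {W : Submodule K V} {B : V → V → K} {ψ : V → K} {φ φ' : V →ₗ[K] K} {c : K}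
    (h3 : ∀ x ∈ W, ∀ y ∈ W, ∀ z ∈ W, B x y * ψ z = φ x * (B y z + B z y))
    (h4 : ∀ x ∈ W, ∀ y ∈ W, B x y * c = φ' x * (φ y + ψ y))
    (hφ : ∃ x ∈ W, φ x ≠ 0) (hφ' : ∃ x ∈ W, φ' x ≠ 0) :
    ∃ a : K, ∀ x ∈ W, ∀ y ∈ W, B x y = a * (φ x * φ y) := by
  obtain ⟨x₀, hx₀, hφx₀⟩ := hφ
  by_cases hψ : ∀ z ∈ W, ψ z = 0
  · exfalso
    have hanti : ∀ y ∈ W, ∀ z ∈ W, B y z + B z y = 0 := fun y hy z hz => by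
      have h := h3 x₀ hx₀ y hy z hz
      rw [hψ z hz, mul_zero] at h
      exact (mul_eq_zero.1 h.symm).resolve_left hφx₀
    have hdiag : ∀ x ∈ W, φ x * φ' x = 0 := fun x hx => by
      have hBxx : (2 : K) * B x x = 0 := by linear_combination hanti x hx x hx
      have h := h4 x hx x hx
      rw [(mul_eq_zero.1 hBxx).resolve_left two_ne_zero, hψ x hx] at h
      linear_combination -h
    obtain ⟨x₁, hx₁, hφ'x₁⟩ := hφ'
    rcases LinearMap.forall_eq_zero_or_forall_eq_zero_of_mul_eq_zero hdiag with h | h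
    exacts [hφx₀ (h x₀ hx₀), hφ'x₁ (h x₁ hx₁)]
  push Not at hψ
  obtain ⟨z₀, hz₀, hψz₀⟩ := hψ
  set γ : V → K := fun y => (B y z₀ + B z₀ y) / ψ z₀
  have hBγ : ∀ x ∈ W, ∀ y ∈ W, B x y = φ x * γ y := fun x hx y hy => by
    simp only [γ]
    field_simp
    linear_combination h3 x hx y hy z₀ hz₀
  have hγ : ∀ y ∈ W, ∀ z ∈ W, γ y * ψ z = φ y * γ z + φ z * γ y := fun y hy z hz => by
    apply mul_left_cancel₀ hφx₀
    have h := h3 x₀ hx₀ y hy z hz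
    rw [hBγ x₀ hx₀ y hy, hBγ y hy z hz, hBγ z hz y hy] at h
    linear_combination h
  by_cases hψφ : ∀ z ∈ W, ψ z = φ z
  · refine ⟨0, fun x hx y hy => ?_⟩
    have h := hγ x₀ hx₀ y hy
    rw [hψφ y hy] at h
    have hγy : φ x₀ * γ y = 0 := by linear_combination -h
    rw [hBγ x hx y hy, (mul_eq_zero.1 hγy).resolve_left hφx₀]
    ring
  push Not at hψφ
  obtain ⟨z₁, hz₁, hψφz₁⟩ := hψφ
  refine ⟨γ z₁ / (ψ z₁ - φ z₁), fun x hx y hy => ?_⟩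
  have hγy : γ y = γ z₁ / (ψ z₁ - φ z₁) * φ y := by
    field_simp [sub_ne_zero.2 hψφz₁]
    linear_combination hγ y hy z₁ hz₁
  rw [hBγ x hx y hy, hγy]
  ring

namespace ZinbielStr

variable {A : Type*} [AddCommGroup A] [Module ℂ A] (M : ZinbielStr A)

/-- `M.leftPow e k = e ∘ (e ∘ ⋯ ∘ (e ∘ e))` has `k + 1` factors. -/
def leftPow (e : A) : ℕ → A
  | 0 => e
  | k + 1 => M.mul e (leftPow e k)

@[simp]
theorem leftPow_zero (e : A) : M.leftPow e 0 = e := rfl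

theorem leftPow_succ (e : A) (k : ℕ) : M.leftPow e (k + 1) = M.mul e (M.leftPow e k) := rfl

theorem leftPow_mul_leftPow (e : A) (i j : ℕ) :
    M.mul (M.leftPow e i) (M.leftPow e j) =
      ((i + j + 1).choose (j + 1) : ℂ) • M.leftPow e (i + j + 1) := by
  induction hs : i + j using Nat.strong_induction_on generalizing i j with
  | _ s ih =>
  subst hs
  cases i with
  | zero => simp [leftPow_succ]
  | succ i =>
    have hpascal : (i + j + 1).choose (j + 1) + (i + j + 1).choose (i + 1) =
        (i + 1 + j + 1).choose (j + 1) := by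
      have hsymm : (i + 1 + j).choose (i + 1) = (i + 1 + j).choose j := Nat.choose_symm_add
      rw [show i + 1 + j + 1 = i + j + 1 + 1 by omega, Nat.choose_succ_succ' (i + j + 1) j,
        show i + j + 1 = i + 1 + j by omega, hsymm, add_comm]
    rw [leftPow_succ, M.zinbiel, ih (i + j) (by omega) i j rfl,
      ih (i + j) (by omega) j i (by omega), map_smul, map_smul, ← leftPow_succ, ← add_smul,
      ← Nat.cast_add, hpascal, show i + j + 1 + 1 = i + 1 + j + 1 by omega]

theorem mul_leftPow_eq_zero {e v : A} (hve : M.mul v e = 0) (k : ℕ) :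
    M.mul v (M.leftPow e k) = 0 := by
  cases k with
  | zero => exact hve
  | succ k =>
    have hke : M.mul (M.leftPow e k) e = ((k + 1 : ℕ) : ℂ) • M.leftPow e (k + 1) := by
      simpa using M.leftPow_mul_leftPow e k 0
    have h := M.zinbiel v e (M.leftPow e k)
    rw [hve, map_zero, LinearMap.zero_apply, ← leftPow_succ, hke, map_smul] at h
    have h2 : ((k : ℂ) + 2) • M.mul v (M.leftPow e (k + 1)) = 0 := by
      linear_combination (norm := module) -h
    exact (smul_eq_zero.1 h2).resolve_left (by norm_cast)

theorem leftPow_mul_eq_zero {e v : A} (hve : M.mul v e = 0) (hev : M.mul e v = 0) (k : ℕ) :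
    M.mul (M.leftPow e k) v = 0 := by
  induction k with
  | zero => exact hev
  | succ k ih => rw [leftPow_succ, M.zinbiel, ih, M.mul_leftPow_eq_zero hve, map_zero, add_zero]

theorem leftPow_eq_zero_of_le {e : A} {t : ℕ} (hnil : M.leftPow e t = 0) {k : ℕ} (hk : t ≤ k) :
    M.leftPow e k = 0 := by
  induction k, hk using Nat.le_induction with
  | base => exact hnil
  | succ k _ ih => rw [leftPow_succ, ih, map_zero]

theorem lcs_succ {k : ℕ} (hk : 1 ≤ k) : M.lcs (k + 1) = map₂ M.mul ⊤ (M.lcs k) := by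
  obtain ⟨k, rfl⟩ := Nat.exists_eq_add_of_le' hk
  show span ℂ _ = _
  rw [map₂_eq_span_image2]
  congr 1
  ext z
  simp [Set.image2, eq_comm]

structure IsRankOneOn (W : Submodule ℂ A) (e : A) (φ : A →ₗ[ℂ] ℂ) : Prop where
  mem : e ∈ W
  apply_self : φ e = 1
  mul_eq : ∀ x ∈ W, ∀ y ∈ W, M.mul x y = (φ x * φ y) • M.mul e e

variable {M}

theorem isRankOneOn_inv_smul {W : Submodule ℂ A} {φ : A →ₗ[ℂ] ℂ} {a : ℂ} {u : A}
    (h : ∀ x ∈ W, ∀ y ∈ W, M.mul x y = (a * (φ x * φ y)) • u) {x : A} (hx : x ∈ W)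
    (hφx : φ x ≠ 0) : M.IsRankOneOn W ((φ x)⁻¹ • x) φ := by
  have hφe : φ ((φ x)⁻¹ • x) = 1 := by simp [hφx]
  refine ⟨W.smul_mem _ hx, hφe, fun y hy z hz => ?_⟩
  rw [h y hy z hz, h _ (W.smul_mem _ hx) _ (W.smul_mem _ hx), hφe, smul_smul]
  ring_nf

namespace IsRankOneOn

variable {W : Submodule ℂ A} {e : A} {φ : A →ₗ[ℂ] ℂ}

theorem mul_leftPow_eq_zero (hr : M.IsRankOneOn W e φ) {v : A} (hv : v ∈ W) (hφv : φ v = 0)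
    (k : ℕ) : M.mul v (M.leftPow e k) = 0 :=
  M.mul_leftPow_eq_zero (by simp [hr.mul_eq v hv e hr.mem, hφv]) k

theorem leftPow_mul_eq_zero (hr : M.IsRankOneOn W e φ) {v : A} (hv : v ∈ W) (hφv : φ v = 0)
    (k : ℕ) : M.mul (M.leftPow e k) v = 0 :=
  M.leftPow_mul_eq_zero (by simp [hr.mul_eq v hv e hr.mem, hφv])
    (by simp [hr.mul_eq e hr.mem v hv, hφv]) k

theorem mul_leftPow (hr : M.IsRankOneOn W e φ) {x : A} (hx : x ∈ W) (k : ℕ) :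
    M.mul x (M.leftPow e k) = φ x • M.leftPow e (k + 1) := by
  have hv : x - φ x • e ∈ W := W.sub_mem hx (W.smul_mem _ hr.mem)
  have hφv : φ (x - φ x • e) = 0 := by simp [hr.apply_self]
  calc M.mul x (M.leftPow e k) = M.mul (φ x • e + (x - φ x • e)) (M.leftPow e k) := by
        rw [add_sub_cancel]
    _ = φ x • M.leftPow e (k + 1) := by
        rw [map_add, LinearMap.add_apply, hr.mul_leftPow_eq_zero hv hφv, add_zero, map_smul,
          LinearMap.smul_apply, leftPow_succ]

theorem mul_append (hr : M.IsRankOneOn W e φ) {t m : ℕ} (hnil : M.leftPow e t = 0)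
    {w : Fin m → A} (hw : ∀ i, w i ∈ W ∧ φ (w i) = 0) (i j : Fin (t + m)) :
    M.mul (Fin.append (fun k : Fin t => M.leftPow e k) w i)
        (Fin.append (fun k : Fin t => M.leftPow e k) w j) =
      if h : (i : ℕ) + (j : ℕ) + 2 ≤ t then
        (((i : ℕ) + (j : ℕ) + 1).choose ((j : ℕ) + 1) : ℂ) •
          Fin.append (fun k : Fin t => M.leftPow e k) w ⟨(i : ℕ) + (j : ℕ) + 1, by omega⟩
      else 0 := by
  induction i using Fin.addCases with
  | left i =>
    induction j using Fin.addCases with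
    | left j =>
      simp only [Fin.append_left, Fin.val_castAdd, leftPow_mul_leftPow]
      split_ifs with h
      · rw [← Fin.append_left (fun k : Fin t => M.leftPow e k) w ⟨_, by omega⟩]
        rfl
      · rw [M.leftPow_eq_zero_of_le hnil (by omega), smul_zero]
    | right j =>
      rw [dif_neg (by simp only [Fin.val_castAdd, Fin.val_natAdd]; omega), Fin.append_left,
        Fin.append_right]
      exact hr.leftPow_mul_eq_zero (hw j).1 (hw j).2 i
  | right i =>
    rw [dif_neg (by simp only [Fin.val_natAdd]; omega), Fin.append_right]
    induction j using Fin.addCases with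
    | left j => exact (Fin.append_left _ w j).symm ▸ hr.mul_leftPow_eq_zero (hw i).1 (hw i).2 j
    | right j => simp [Fin.append_right, hr.mul_eq _ (hw i).1 _ (hw j).1, (hw i).2]

theorem exists_basis_mul_eq_choose_smul (hr : M.IsRankOneOn W e φ) {n : ℕ} (hA : finrank ℂ A = n)
    (hW : finrank ℂ W = 3) (hnil : M.leftPow e (n - 2) = 0)
    (hspan : ⊤ ≤ W ⊔ span ℂ (M.leftPow e '' Set.Ico 1 (n - 2))) :
    ∃ b : Basis (Fin n) ℂ A, ∀ i j : Fin n,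
      M.mul (b i) (b j) =
        if h : (i : ℕ) + (j : ℕ) + 2 ≤ n - 2 then
          (((i : ℕ) + (j : ℕ) + 1).choose ((j : ℕ) + 1) : ℂ) •
            b ⟨(i : ℕ) + (j : ℕ) + 1, by omega⟩
        else 0 := by
  have ht : 1 ≤ n - 2 := by
    by_contra h
    rw [show n - 2 = 0 by omega, leftPow_zero] at hnil
    simpa [hnil] using hr.apply_self
  obtain ⟨t, rfl⟩ : ∃ t, n = t + 2 := ⟨n - 2, by omega⟩
  simp only [Nat.add_sub_cancel] at ht hnil hspan ⊢
  have : FiniteDimensional ℂ W := Module.finite_of_finrank_eq_succ hW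
  obtain ⟨w, hw, hWspan⟩ := exists_le_span_of_apply_eq_one hW hr.mem hr.apply_self
  set b := Fin.append (fun k : Fin t => M.leftPow e k) w
  have hleft : ∀ k (hk : k < t), M.leftPow e k ∈ Set.range b :=
    fun k hk => ⟨Fin.castAdd 2 ⟨k, hk⟩, Fin.append_left _ w _⟩
  have hle : ⊤ ≤ span ℂ (Set.range b) := by
    refine hspan.trans (sup_le (hWspan.trans (sup_le ?_ ?_)) (span_mono ?_))
    · exact span_mono (Set.singleton_subset_iff.2 (hleft 0 ht))
    · exact span_mono (Set.range_subset_iff.2 fun i => ⟨Fin.natAdd t i, Fin.append_right _ w i⟩)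
    · rintro _ ⟨k, hk, rfl⟩
      exact hleft k hk.2
  refine ⟨basisOfTopLeSpanOfCardEqFinrank b hle (by simp [hA]), fun i j => ?_⟩
  rw [coe_basisOfTopLeSpanOfCardEqFinrank]
  exact hr.mul_append hnil hw i j

end IsRankOneOn

namespace IsNaturalGrading

variable {t : ℕ} {Ag : ℕ → Submodule ℂ A}

theorem iSup_eq_top (hg : M.IsNaturalGrading t Ag) (ht : 1 ≤ t) : ⨆ j, Ag j = ⊤ :=
  top_unique <| (hg.lcs_eq 1 le_rfl ht).le.trans (iSup_mono fun _ => iSup_const_le)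

theorem map₂_eq (hg : M.IsNaturalGrading t Ag) {k : ℕ} (hk : 1 ≤ k) (hkt : k + 1 ≤ t) :
    map₂ M.mul (Ag 1) (Ag k) = Ag (k + 1) := by
  have hle : map₂ M.mul (Ag 1) (Ag k) ≤ Ag (k + 1) :=
    map₂_le.2 fun x hx y hy => add_comm 1 k ▸ hg.mul_mem 1 k x y hx hy
  set Q := ⨆ j, ⨆ (_ : k + 2 ≤ j), Ag j
  have hlcs : M.lcs (k + 1) ≤ map₂ M.mul (Ag 1) (Ag k) ⊔ Q := by
    rw [M.lcs_succ hk, hg.lcs_eq k hk (by omega), ← hg.iSup_eq_top (by omega), map₂_iSup_left]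
    refine iSup_le fun i => ?_
    rw [map₂_iSup_right]
    refine iSup_le fun j => ?_
    rw [map₂_iSup_right]
    refine iSup_le fun hj => ?_
    obtain rfl | hi := eq_or_ne i 0
    · simp [hg.zero_deg]
    by_cases hij : i = 1 ∧ j = k
    · obtain ⟨rfl, rfl⟩ := hij
      exact le_sup_left
    · refine le_sup_of_le_right ((map₂_le.2 fun x hx y hy => hg.mul_mem i j x y hx hy).trans ?_)
      exact le_iSup₂_of_le (f := fun j (_ : k + 2 ≤ j) => Ag j) (i + j) (by omega) le_rfl
  have hAg : Ag (k + 1) ≤ M.lcs (k + 1) := by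
    rw [hg.lcs_eq (k + 1) (by omega) hkt]
    exact le_iSup₂_of_le (f := fun j (_ : k + 1 ≤ j) => Ag j) (k + 1) le_rfl le_rfl
  have hdisj : Q ⊓ Ag (k + 1) = ⊥ :=
    (hg.indep.disjoint_biSup (y := {j | k + 2 ≤ j}) (by simp)).symm.eq_bot
  refine le_antisymm hle ?_
  calc Ag (k + 1) ≤ (map₂ M.mul (Ag 1) (Ag k) ⊔ Q) ⊓ Ag (k + 1) := le_inf (hAg.trans hlcs) le_rfl
    _ = map₂ M.mul (Ag 1) (Ag k) := by rw [sup_inf_assoc_of_le Q hle, hdisj, sup_bot_eq]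

theorem ne_bot (hg : M.IsNaturalGrading t Ag) (hlcs : M.lcs t ≠ ⊥) {k : ℕ} (hk : 1 ≤ k)
    (hkt : k ≤ t) : Ag k ≠ ⊥ := by
  intro hk0
  have hup : ∀ j, k ≤ j → j ≤ t → Ag j = ⊥ := by
    intro j hj
    induction j, hj using Nat.le_induction with
    | base => exact fun _ => hk0
    | succ j hkj ih =>
      intro hjt
      rw [← hg.map₂_eq (by omega) hjt, ih (by omega), map₂_bot_right]
  apply hlcs
  rw [hg.lcs_eq t (by omega) le_rfl, eq_bot_iff]
  refine iSup₂_le fun j hj => ?_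
  rcases hj.eq_or_lt with rfl | hj
  · exact (hup _ hkt le_rfl).le
  · exact (hg.high_deg j hj).le

theorem finrank_eq_one [FiniteDimensional ℂ A] (hg : M.IsNaturalGrading t Ag)
    (hA : finrank ℂ A = t + 2) (h1 : finrank ℂ (Ag 1) = 3) (hlcs : M.lcs t ≠ ⊥) {k : ℕ}
    (hk : 2 ≤ k) (hkt : k ≤ t) : finrank ℂ (Ag k) = 1 := by
  have hpos : ∀ j ∈ Finset.Icc 1 t, 1 ≤ finrank ℂ (Ag j) := fun j hj => by
    rw [Finset.mem_Icc] at hj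
    exact Nat.one_le_iff_ne_zero.2 (mt finrank_eq_zero.1 (hg.ne_bot hlcs hj.1 hj.2))
  have hsum : ∑ j ∈ Finset.Icc 1 t, finrank ℂ (Ag j) ≤ t + 2 :=
    hA ▸ hg.indep.finrank_biSup_eq_sum _ ▸ Submodule.finrank_le _
  have hsplit : ∑ j ∈ Finset.Icc 1 t, finrank ℂ (Ag j) =
      t + ∑ j ∈ Finset.Icc 1 t, (finrank ℂ (Ag j) - 1) := by
    rw [Finset.sum_congr rfl fun j hj => (Nat.add_sub_cancel' (hpos j hj)).symm,
      Finset.sum_add_distrib, Finset.sum_const, Nat.card_Icc, smul_eq_mul, mul_one,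
      Nat.add_sub_cancel]
  have hpair : (finrank ℂ (Ag 1) - 1) + (finrank ℂ (Ag k) - 1) ≤
      ∑ j ∈ Finset.Icc 1 t, (finrank ℂ (Ag j) - 1) := by
    rw [← Finset.sum_pair (f := fun j => finrank ℂ (Ag j) - 1) (by omega : 1 ≠ k)]
    refine Finset.sum_le_sum_of_subset fun j hj => ?_
    simp only [Finset.mem_insert, Finset.mem_singleton] at hj
    rw [Finset.mem_Icc]
    omega
  have := hpos k (Finset.mem_Icc.2 ⟨by omega, hkt⟩)
  omega

theorem exists_apply_ne_zero (hg : M.IsNaturalGrading t Ag) {k : ℕ} (hk : 1 ≤ k)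
    (hkt : k + 1 ≤ t) (hne : Ag (k + 1) ≠ ⊥) {y u : A} (hy : Ag k ≤ span ℂ {y})
    {ℓ : A →ₗ[ℂ] ℂ} (hℓ : ∀ x ∈ Ag 1, M.mul x y = ℓ x • u) : ∃ x ∈ Ag 1, ℓ x ≠ 0 := by
  by_contra! h
  refine hne (eq_bot_iff.2 ?_)
  rw [← hg.map₂_eq hk hkt]
  refine (map₂_le_map₂_right hy).trans (map₂_le.2 fun x hx z hz => ?_)
  obtain ⟨c, rfl⟩ := mem_span_singleton.1 hz
  simp [hℓ x hx, h x hx]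

theorem leftPow_mem (hg : M.IsNaturalGrading t Ag) {e : A} (he : e ∈ Ag 1) (k : ℕ) :
    M.leftPow e k ∈ Ag (k + 1) := by
  induction k with
  | zero => exact he
  | succ k ih => simpa [leftPow_succ, add_comm] using hg.mul_mem 1 (k + 1) _ _ he ih

theorem leftPow_eq_zero (hg : M.IsNaturalGrading t Ag) {e : A} (he : e ∈ Ag 1) :
    M.leftPow e t = 0 := by
  simpa [hg.high_deg (t + 1) (by omega)] using hg.leftPow_mem he t

theorem le_span_leftPow (hg : M.IsNaturalGrading t Ag) {e : A} {φ : A →ₗ[ℂ] ℂ}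
    (hr : M.IsRankOneOn (Ag 1) e φ) {k : ℕ} (hk : 1 ≤ k) (hkt : k + 1 ≤ t) :
    Ag (k + 1) ≤ span ℂ {M.leftPow e k} := by
  induction k, hk using Nat.le_induction with
  | base =>
    rw [← hg.map₂_eq le_rfl hkt, map₂_le]
    intro x hx y hy
    rw [hr.mul_eq x hx y hy]
    exact smul_mem _ _ (mem_span_singleton_self _)
  | succ k hk ih =>
    rw [← hg.map₂_eq (by omega) hkt]
    refine (map₂_le_map₂_right (ih (by omega))).trans (map₂_le.2 fun x hx y hy => ?_)
    obtain ⟨c, rfl⟩ := mem_span_singleton.1 hy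
    rw [map_smul, hr.mul_leftPow hx, smul_smul]
    exact smul_mem _ _ (mem_span_singleton_self _)

theorem top_le_sup_span_leftPow (hg : M.IsNaturalGrading t Ag) (ht : 1 ≤ t) {e : A}
    {φ : A →ₗ[ℂ] ℂ} (hr : M.IsRankOneOn (Ag 1) e φ) :
    ⊤ ≤ Ag 1 ⊔ span ℂ (M.leftPow e '' Set.Ico 1 t) := by
  rw [← hg.iSup_eq_top ht]
  refine iSup_le fun j => ?_
  rcases j with _ | _ | k
  · simp [hg.zero_deg]
  · exact le_sup_left
  by_cases hk : k + 2 ≤ t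
  · refine le_sup_of_le_right ((hg.le_span_leftPow hr (by omega) hk).trans (span_mono ?_))
    exact Set.singleton_subset_iff.2 ⟨k + 1, ⟨by omega, by omega⟩, rfl⟩
  · simp [hg.high_deg (k + 2) (by omega)]

theorem exists_isRankOneOn (hg : M.IsNaturalGrading t Ag)
    (hrank : ∀ k, 2 ≤ k → k ≤ 4 → finrank ℂ (Ag k) = 1) :
    ∃ e φ, M.IsRankOneOn (Ag 1) e φ := by
  have hne : ∀ k, 2 ≤ k → k ≤ 4 → Ag k ≠ ⊥ := fun k hk2 hk4 h => by
    have h1 := hrank k hk2 hk4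
    rw [h, finrank_bot] at h1
    exact zero_ne_one h1
  have ht : 4 ≤ t := not_lt.1 fun h => hne 4 (by norm_num) le_rfl (hg.high_deg 4 h)
  obtain ⟨x₂, hx₂, ℓ₂, -, h₂⟩ := exists_coord_of_finrank_eq_one (hrank 2 le_rfl (by norm_num))
  obtain ⟨x₃, hx₃, ℓ₃, hℓ₃, h₃⟩ :=
    exists_coord_of_finrank_eq_one (hrank 3 (by norm_num) (by norm_num))
  obtain ⟨x₄, -, ℓ₄, hℓ₄, h₄⟩ := exists_coord_of_finrank_eq_one (hrank 4 (by norm_num) le_rfl)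
  set B : A → A → ℂ := fun x y => ℓ₂ (M.mul x y)
  set φ := ℓ₃ ∘ₗ M.mul.flip x₂
  set ψ : A → ℂ := fun x => ℓ₃ (M.mul x₂ x)
  set φ' := ℓ₄ ∘ₗ M.mul.flip x₃
  have hB : ∀ x ∈ Ag 1, ∀ y ∈ Ag 1, M.mul x y = B x y • x₂ :=
    fun x hx y hy => h₂ _ (hg.mul_mem 1 1 x y hx hy)
  have hφ : ∀ x ∈ Ag 1, M.mul x x₂ = φ x • x₃ := fun x hx => h₃ _ (hg.mul_mem 1 2 _ _ hx hx₂)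
  have hψ : ∀ x ∈ Ag 1, M.mul x₂ x = ψ x • x₃ := fun x hx => h₃ _ (hg.mul_mem 2 1 _ _ hx₂ hx)
  have hφ' : ∀ x ∈ Ag 1, M.mul x x₃ = φ' x • x₄ := fun x hx => h₄ _ (hg.mul_mem 1 3 _ _ hx hx₃)
  obtain ⟨c, hc⟩ : ∃ c : ℂ, M.mul x₂ x₂ = c • x₄ := ⟨_, h₄ _ (hg.mul_mem 2 2 _ _ hx₂ hx₂)⟩
  have h3 : ∀ x ∈ Ag 1, ∀ y ∈ Ag 1, ∀ z ∈ Ag 1, B x y * ψ z = φ x * (B y z + B z y) := by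
    intro x hx y hy z hz
    have h := congrArg ℓ₃ (M.zinbiel x y z)
    rw [hB x hx y hy, hB y hy z hz, hB z hz y hy] at h
    simp only [map_smul, LinearMap.smul_apply, hψ z hz, hφ x hx, map_add, smul_eq_mul, hℓ₃] at h
    linear_combination h
  have h4 : ∀ x ∈ Ag 1, ∀ y ∈ Ag 1, B x y * c = φ' x * (φ y + ψ y) := by
    intro x hx y hy
    have h := congrArg ℓ₄ (M.zinbiel x y x₂)
    rw [hB x hx y hy, hφ y hy, hψ y hy] at h
    simp only [map_smul, LinearMap.smul_apply, hc, hφ' x hx, map_add, smul_eq_mul, hℓ₄] at h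
    linear_combination h
  obtain ⟨x, hx, hφx⟩ := hg.exists_apply_ne_zero (k := 2) (by norm_num) (by omega)
    (hne 3 (by norm_num) (by norm_num)) (le_span_singleton_iff.2 fun z hz => ⟨_, (h₂ z hz).symm⟩) hφ
  have hφ'ne := hg.exists_apply_ne_zero (k := 3) (by norm_num) (by omega)
    (hne 4 (by norm_num) le_rfl) (le_span_singleton_iff.2 fun z hz => ⟨_, (h₃ z hz).symm⟩) hφ'
  obtain ⟨a, ha⟩ := exists_eq_mul_mul_of_relations h3 h4 ⟨x, hx, hφx⟩ hφ'ne
  refine ⟨_, φ, isRankOneOn_inv_smul (a := a) (u := x₂) (fun y hy z hz => ?_) hx hφx⟩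
  rw [hB y hy z hz, ha y hy z hz]

end IsNaturalGrading

/-- Every `n`-dimensional (`n ≥ 6`) naturally graded quasi-filiform complex Zinbiel
algebra of type `A_(1)` (i.e. `dim A_1 = 3`) is isomorphic to `KF_n^1`. -/
theorem type_one_classification {A : Type*} [AddCommGroup A] [Module ℂ A]
    [FiniteDimensional ℂ A] (M : ZinbielStr A) (n : ℕ) (hn : 6 ≤ n)
    (Ag : ℕ → Submodule ℂ A)
    (hqf : M.IsQuasiFiliform n) (hg : M.IsNaturalGrading (n - 2) Ag)
    (htype : Module.finrank ℂ (Ag 1) = 3) :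
    ∃ e : Module.Basis (Fin n) ℂ A, ∀ i j : Fin n,
      M.mul (e i) (e j) =
        if h : (i : ℕ) + (j : ℕ) + 2 ≤ n - 2 then
          (((i : ℕ) + (j : ℕ) + 1).choose ((j : ℕ) + 1) : ℂ) •
            e ⟨(i : ℕ) + (j : ℕ) + 1, by omega⟩
        else 0 := by
  obtain ⟨hdim, hlcs, -⟩ := hqf
  have hrank : ∀ k, 2 ≤ k → k ≤ 4 → finrank ℂ (Ag k) = 1 :=
    fun k hk2 hk4 => hg.finrank_eq_one (by omega) htype hlcs hk2 (by omega)
  obtain ⟨e, φ, hr⟩ := hg.exists_isRankOneOn hrank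
  exact hr.exists_basis_mul_eq_choose_smul hdim htype (hg.leftPow_eq_zero hr.mem)
    (hg.top_le_sup_span_leftPow (by omega) hr)

end ZinbielStr
end

section
/- Let A be a naturally graded quasi-filiform complex Zinbiel algebra of type A_(r) with r > 2, with grading A = A_1 ⊕ ⋯ ⊕ A_{n−2}. Then x∘x = 0 for every x ∈ A_1. -/
/-!
Generation in degree one (`A_{k+1} = A_1 ∘ A_k`, read off from `A^k = A_k ⊕ A^{k+1}`) and a
dimension count make every grade `A_k` with `2 ≤ k ≤ n - 2`, `k ≠ r`, a line. If some `x ∈ A_1`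
had `x ∘ x ≠ 0`, complete it to a basis `x, y` of `A_1` and follow the right-normed powers
`x^{k+1} = x ∘ x^k ∈ A_{k+1}`, which satisfy `x^k ∘ x = k x^{k+1}`. If `x^{r-1} ≠ 0`, it spans
`A_{r-1}` and the Zinbiel identity forces `y ∘ x^{r-1}` to be a multiple of `x ∘ x^{r-1}`.
Otherwise `x` annihilates the grades from the last nonzero power up to `A_r`, so each of them is
spanned by a single `y`-multiple. Either way `A_r = A_1 ∘ A_{r-1}` is at most a line,
contradicting `dim A_r = 2`.
-/

namespace Submodule

section GradeTail

variable {R M : Type*} [Semiring R] [AddCommMonoid M] [Module R M]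

def gradeTail (Ag : ℕ → Submodule R M) (k : ℕ) : Submodule R M :=
  ⨆ j, ⨆ (_ : k ≤ j), Ag j

variable {Ag : ℕ → Submodule R M}

theorem le_gradeTail {k j : ℕ} (h : k ≤ j) : Ag j ≤ gradeTail Ag k :=
  le_iSup₂_of_le j h le_rfl

theorem gradeTail_antitone : Antitone (gradeTail Ag) :=
  fun _ _ hkl => iSup₂_le fun _ hj => le_gradeTail (hkl.trans hj)

theorem gradeTail_eq_sup (k : ℕ) : gradeTail Ag k = Ag k ⊔ gradeTail Ag (k + 1) := by
  refine le_antisymm (iSup₂_le fun j hj => ?_)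
    (sup_le (le_gradeTail le_rfl) (gradeTail_antitone k.le_succ))
  rcases hj.eq_or_lt with rfl | h
  · exact le_sup_left
  · exact le_sup_of_le_right (le_gradeTail h)

theorem gradeTail_eq_bot {t k : ℕ} (hhigh : ∀ j, t < j → Ag j = ⊥) (hk : t < k) :
    gradeTail Ag k = ⊥ :=
  eq_bot_iff.mpr <| iSup₂_le fun j hj => (hhigh j (hk.trans_le hj)).le

theorem gradeTail_eq_biSup_Icc {t : ℕ} (hhigh : ∀ j, t < j → Ag j = ⊥) (k : ℕ) :
    gradeTail Ag k = ⨆ j ∈ Finset.Icc k t, Ag j := by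
  refine le_antisymm (iSup₂_le fun j hkj => ?_) (iSup₂_le fun j hj => ?_)
  · rcases le_or_gt j t with hjt | hjt
    · exact le_biSup Ag (Finset.mem_Icc.mpr ⟨hkj, hjt⟩)
    · simp [hhigh j hjt]
  · exact le_gradeTail (Finset.mem_Icc.mp hj).1

theorem _root_.iSupIndep.disjoint_gradeTail (h : iSupIndep Ag) (k : ℕ) :
    Disjoint (Ag k) (gradeTail Ag (k + 1)) :=
  (h k).mono_right <| iSup₂_le fun j hj => le_iSup₂_of_le j (by omega) le_rfl

end GradeTail

theorem map₂_gradeTail_le {R M : Type*} [CommSemiring R] [AddCommMonoid M] [Module R M]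
    {Ag : ℕ → Submodule R M} (f : M →ₗ[R] M →ₗ[R] M) (hf : ∀ i j, map₂ f (Ag i) (Ag j) ≤ Ag (i + j)) (i j : ℕ) :
    map₂ f (gradeTail Ag i) (gradeTail Ag j) ≤ gradeTail Ag (i + j) := by
  simp only [gradeTail, map₂_iSup_left, map₂_iSup_right]
  exact iSup₂_le fun q hq => iSup₂_le fun p hp =>
    (hf p q).trans (le_gradeTail (Nat.add_le_add hp hq))

theorem _root_.iSupIndep.finrank_biSup {ι K V : Type*} [DecidableEq ι] [DivisionRing K]
    [AddCommGroup V] [Module K V] [FiniteDimensional K V] {Ag : ι → Submodule K V}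
    (h : iSupIndep Ag) (s : Finset ι) :
    Module.finrank K ↥(⨆ i ∈ s, Ag i : Submodule K V) = ∑ i ∈ s, Module.finrank K (Ag i) := by
  induction s using Finset.induction_on with
  | empty => simp
  | insert a s ha ih =>
    have hdisj : Disjoint (Ag a) (⨆ i ∈ s, Ag i) := by
      simpa only [Finset.mem_coe] using h.disjoint_biSup (y := s) ha
    rw [Finset.iSup_insert, Finset.sum_insert ha, ← ih,
      ← finrank_sup_add_finrank_inf_eq, hdisj.eq_bot, finrank_bot, add_zero]

theorem exists_eq_span_pair_of_finrank_eq_two {K V : Type*} [DivisionRing K] [AddCommGroup V]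
    [Module K V] [FiniteDimensional K V] {S : Submodule K V} (hS : Module.finrank K S = 2)
    {x : V} (hx : x ∈ S) (hx0 : x ≠ 0) : ∃ y ∈ S, S = span K {x, y} := by
  obtain ⟨y, hyS, hy⟩ : ∃ y ∈ S, y ∉ K ∙ x := by
    by_contra! h
    have := finrank_mono (show S ≤ K ∙ x from h)
    rw [hS, finrank_span_singleton hx0] at this
    omega
  refine ⟨y, hyS, (eq_of_le_of_finrank_le ?_ ?_).symm⟩
  · exact span_le.mpr (Set.insert_subset hx (Set.singleton_subset_iff.mpr hyS))
  · rw [span_insert, hS, finrank_sup_span_singleton hy, finrank_span_singleton hx0]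

end Submodule

namespace ZinbielStr

open Submodule

variable {A : Type*} [AddCommGroup A] [Module ℂ A] (M : ZinbielStr A)

theorem lcs_succ_s14 {k : ℕ} (hk : 1 ≤ k) :
    M.lcs (k + 1) = span ℂ {z | ∃ a b, b ∈ M.lcs k ∧ z = M.mul a b} := by
  obtain ⟨k, rfl⟩ := Nat.exists_eq_add_of_le' hk
  rfl

/-- `M.powSucc x k` is the right-normed power `x ∘ (x ∘ ⋯ (x ∘ x))` with `k + 1` factors. -/
def powSucc (x : A) : ℕ → A
  | 0 => x
  | k + 1 => M.mul x (powSucc x k)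

variable {M}

theorem powSucc_succ (x : A) (k : ℕ) : M.powSucc x (k + 1) = M.mul x (M.powSucc x k) := rfl

theorem powSucc_mul_self (x : A) (k : ℕ) :
    M.mul (M.powSucc x k) x = ((k + 1 : ℕ) : ℂ) • M.powSucc x (k + 1) := by
  induction k with
  | zero => simp [powSucc]
  | succ k ih =>
    rw [powSucc_succ, M.zinbiel, ih, map_smul, ← powSucc_succ x k, ← powSucc_succ x (k + 1)]
    push_cast
    module

theorem powSucc_eq_zero_of_le {x : A} {j k : ℕ} (hjk : j ≤ k) (hj : M.powSucc x j = 0) :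
    M.powSucc x k = 0 := by
  induction k, hjk using Nat.le_induction with
  | base => exact hj
  | succ k _ ih => rw [powSucc_succ, ih, map_zero]

theorem exists_powSucc_ne_zero_and_succ_eq_zero {x : A} (hx : M.mul x x ≠ 0) {j : ℕ}
    (hj : M.powSucc x j = 0) :
    ∃ m, 1 ≤ m ∧ m < j ∧ M.powSucc x m ≠ 0 ∧ M.powSucc x (m + 1) = 0 := by
  obtain ⟨m, hm, hm'⟩ := Nat.exists_not_and_succ_of_not_zero_of_exists
    (p := fun k => M.powSucc x (k + 1) = 0) hx ⟨j, powSucc_eq_zero_of_le j.le_succ hj⟩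
  refine ⟨m + 1, m.succ_pos, ?_, hm, hm'⟩
  by_contra! hjm
  exact hm (powSucc_eq_zero_of_le hjm hj)

/-- Expand `(y ∘ x^{j+1}) ∘ x` by the Zinbiel identity and `x^k ∘ x = k x^{k+1}`. -/
theorem mul_powSucc_succ {x y : A} {γ : ℂ} {j : ℕ}
    (h : M.mul y (M.powSucc x j) = γ • M.powSucc x (j + 1)) :
    M.mul y (M.powSucc x (j + 1)) = γ • M.powSucc x (j + 2) := by
  have hz := M.zinbiel y (M.powSucc x j) x
  rw [h, map_smul, LinearMap.smul_apply, powSucc_mul_self, powSucc_mul_self, map_smul] at hz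
  rw [← powSucc_succ x j] at hz
  have hne : ((j + 1 + 1 : ℕ) : ℂ) ≠ 0 := Nat.cast_ne_zero.mpr (by omega)
  refine smul_right_injective A hne ?_
  dsimp only
  rw [smul_comm, hz]
  push_cast
  module

theorem mul_iterate_mul_eq_zero {x y w : A} {c : ℂ} (hxy : M.mul x y = c • M.mul x x)
    (hxw : M.mul x w = 0) (hwx : M.mul w x = 0) (hwy : M.mul w y = 0) (j : ℕ) :
    M.mul x ((M.mul y)^[j] w) = 0 ∧ M.mul ((M.mul y)^[j] w) x = 0 ∧
      M.mul ((M.mul y)^[j] w) y = (j : ℂ) • M.mul y ((M.mul y)^[j] w) := by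
  induction j with
  | zero => simp [hxw, hwx, hwy]
  | succ j ih =>
    obtain ⟨hxu, hux, huy⟩ := ih
    set u := (M.mul y)^[j] w
    rw [Function.iterate_succ_apply']
    refine ⟨?_, by rw [M.zinbiel, hux, hxu, map_zero, add_zero], ?_⟩
    · -- `(x ∘ y) ∘ u` is `c (x ∘ x) ∘ u = 0` on one side, `(j + 1) x ∘ (y ∘ u)` on the other.
      have hz := M.zinbiel x y u
      rw [hxy, LinearMap.map_smul₂, M.zinbiel, hxu, hux, map_zero, add_zero, smul_zero, huy,
        map_smul] at hz
      have hne : ((j + 1 : ℕ) : ℂ) ≠ 0 := Nat.cast_ne_zero.mpr j.succ_ne_zero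
      refine (smul_eq_zero.mp (?_ : ((j + 1 : ℕ) : ℂ) • M.mul x (M.mul y u) = 0)).resolve_left hne
      rw [hz]
      push_cast
      module
    · rw [M.zinbiel, huy, map_smul]
      push_cast
      module

namespace IsNaturalGrading

variable {t : ℕ} {Ag : ℕ → Submodule ℂ A} (hg : M.IsNaturalGrading t Ag)
include hg

theorem lcs_eq_gradeTail {k : ℕ} (hk : 1 ≤ k) (hkt : k ≤ t) : M.lcs k = gradeTail Ag k :=
  hg.lcs_eq k hk hkt

theorem map₂_grade_le (i j : ℕ) : map₂ M.mul (Ag i) (Ag j) ≤ Ag (i + j) :=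
  map₂_le.mpr fun a ha b hb => hg.mul_mem i j a b ha hb

theorem le_of_grade_ne_bot {k : ℕ} (hk : Ag k ≠ ⊥) : k ≤ t := by
  by_contra h
  exact hk (hg.high_deg k (by omega))

theorem finrank_eq_sum [FiniteDimensional ℂ A] (ht : 1 ≤ t) :
    Module.finrank ℂ A = ∑ j ∈ Finset.Icc 1 t, Module.finrank ℂ (Ag j) := by
  rw [← hg.indep.finrank_biSup, ← gradeTail_eq_biSup_Icc hg.high_deg,
    ← hg.lcs_eq_gradeTail le_rfl ht]
  exact (finrank_top ℂ A).symm

/-- Modulo `A^{k+2}`, the product `A^{k+1} = A ∘ A^k` only sees `A_1 ∘ A_k`. -/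
theorem grade_succ_eq_map₂ {k : ℕ} (hk : 1 ≤ k) (hkt : k + 1 ≤ t) :
    Ag (k + 1) = map₂ M.mul (Ag 1) (Ag k) := by
  set P := map₂ M.mul (Ag 1) (Ag k)
  have hP : P ≤ Ag (k + 1) := (hg.map₂_grade_le 1 k).trans_eq (by rw [add_comm])
  have hT := map₂_gradeTail_le M.mul hg.map₂_grade_le
  have hup : Ag (k + 1) ≤ P ⊔ gradeTail Ag (k + 2) := calc
    Ag (k + 1) ≤ M.lcs (k + 1) := hg.lcs_eq_gradeTail (by omega) hkt ▸ le_gradeTail le_rfl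
    _ ≤ map₂ M.mul (gradeTail Ag 1) (gradeTail Ag k) := by
      rw [lcs_succ_s14 M hk, hg.lcs_eq_gradeTail hk (by omega), ← hg.lcs_eq_gradeTail le_rfl (by omega)]
      exact span_le.mpr fun _ ⟨a, b, hb, hz⟩ => hz ▸ apply_mem_map₂ _ trivial hb
    _ ≤ P ⊔ gradeTail Ag (k + 2) := by
      rw [gradeTail_eq_sup 1, gradeTail_eq_sup k, map₂_sup_left, map₂_sup_right, map₂_sup_right,
        sup_assoc]
      refine sup_le_sup_left (sup_le ?_ (sup_le ?_ ?_)) _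
      · exact (map₂_le_map₂ (le_gradeTail le_rfl) le_rfl).trans
          ((hT 1 (k + 1)).trans (gradeTail_antitone (by omega)))
      · exact (map₂_le_map₂ le_rfl (le_gradeTail le_rfl)).trans
          ((hT 2 k).trans (gradeTail_antitone (by omega)))
      · exact (hT 2 (k + 1)).trans (gradeTail_antitone (by omega))
  calc Ag (k + 1) = (P ⊔ gradeTail Ag (k + 2)) ⊓ Ag (k + 1) := (inf_eq_right.mpr hup).symm
    _ = P ⊔ gradeTail Ag (k + 2) ⊓ Ag (k + 1) := sup_inf_assoc_of_le _ hP
    _ = P := by rw [(hg.indep.disjoint_gradeTail (k + 1)).symm.eq_bot, sup_bot_eq]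

theorem grade_ne_bot (hlcs : M.lcs t ≠ ⊥) {k : ℕ} (hk : 1 ≤ k) (hkt : k ≤ t) : Ag k ≠ ⊥ := by
  intro hbot
  have hvanish : ∀ j, k ≤ j → j ≤ t → Ag j = ⊥ := by
    intro j hkj
    induction j, hkj using Nat.le_induction with
    | base => exact fun _ => hbot
    | succ j hkj ih =>
      intro hjt
      rw [hg.grade_succ_eq_map₂ (by omega) hjt, ih (by omega), map₂_bot_right]
  apply hlcs
  rw [hg.lcs_eq_gradeTail (by omega) le_rfl, gradeTail_eq_sup, hvanish t hkt le_rfl,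
    gradeTail_eq_bot hg.high_deg (lt_add_one t), bot_sup_eq]

/-- Every grade up to `t` is nonzero, so the `t - 2` grades other than `A_1` and `A_r` share
`t - 2` dimensions. -/
theorem finrank_grade_eq_one [FiniteDimensional ℂ A] (hA : Module.finrank ℂ A = t + 2)
    (hlcs : M.lcs t ≠ ⊥) {r : ℕ} (hr : 1 < r) (hrt : r ≤ t) (h1 : Module.finrank ℂ (Ag 1) = 2)
    (h2 : Module.finrank ℂ (Ag r) = 2) {k : ℕ} (hk : 2 ≤ k) (hkt : k ≤ t) (hkr : k ≠ r) :
    Module.finrank ℂ (Ag k) = 1 := by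
  set f : ℕ → ℕ := fun j => Module.finrank ℂ (Ag j)
  have hpos : ∀ j ∈ Finset.Icc 1 t, 1 ≤ f j := fun j hj =>
    Nat.one_le_iff_ne_zero.mpr <| finrank_eq_zero.not.mpr <|
      hg.grade_ne_bot hlcs (Finset.mem_Icc.mp hj).1 (Finset.mem_Icc.mp hj).2
  have hexcess : ∑ j ∈ Finset.Icc 1 t, (f j - 1) = 2 := by
    rw [Finset.sum_tsub_distrib _ hpos, ← hg.finrank_eq_sum (by omega), hA]
    simp
  have hsub : ({1, r, k} : Finset ℕ) ⊆ Finset.Icc 1 t := by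
    intro j hj
    simp only [Finset.mem_insert, Finset.mem_singleton] at hj
    rw [Finset.mem_Icc]
    omega
  have hle := Finset.sum_le_sum_of_subset (f := fun j => f j - 1) hsub
  rw [Finset.sum_insert (by simp; omega), Finset.sum_pair hkr.symm, hexcess] at hle
  have := hpos k (Finset.mem_Icc.mpr ⟨by omega, hkt⟩)
  simp only [f, h1, h2] at hle this ⊢
  omega

theorem grade_succ_eq_span_pair {x y w : A} (h1 : Ag 1 = span ℂ {x, y}) {k : ℕ} (hk : 1 ≤ k)
    (hkt : k + 1 ≤ t) (hw : Ag k = span ℂ {w}) :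
    Ag (k + 1) = span ℂ {M.mul x w, M.mul y w} := by
  rw [hg.grade_succ_eq_map₂ hk hkt, h1, hw, map₂_span_span, Set.image2_singleton_right,
    Set.image_pair]

theorem powSucc_mem {x : A} (hx : x ∈ Ag 1) (k : ℕ) : M.powSucc x k ∈ Ag (k + 1) := by
  induction k with
  | zero => exact hx
  | succ k ih =>
    have := hg.mul_mem 1 (k + 1) x _ hx ih
    rwa [add_comm] at this

theorem grade_eq_span_powSucc {x y : A} (h1 : Ag 1 = span ℂ {x, y}) {j : ℕ}
    (hline : Module.finrank ℂ (Ag (j + 2)) = 1) (hp : M.powSucc x (j + 1) ≠ 0)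
    (hjt : j + 3 ≤ t) : Ag (j + 3) = span ℂ {M.powSucc x (j + 2)} := by
  have hx : x ∈ Ag 1 := h1 ▸ subset_span (Set.mem_insert x {y})
  have hy : y ∈ Ag 1 := h1 ▸ subset_span (Set.mem_insert_of_mem x rfl)
  have hspan : Ag (j + 2) = span ℂ {M.powSucc x (j + 1)} :=
    eq_span_singleton_of_mem_of_finrank_eq_one hline (hg.powSucc_mem hx (j + 1)) hp
  have hyp : M.mul y (M.powSucc x j) ∈ Ag (j + 2) := by
    have := hg.mul_mem 1 (j + 1) y _ hy (hg.powSucc_mem hx j)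
    rwa [add_comm] at this
  obtain ⟨γ, hγ⟩ := mem_span_singleton.mp (hspan ▸ hyp)
  rw [hg.grade_succ_eq_span_pair h1 (by omega) hjt hspan, mul_powSucc_succ hγ.symm,
    ← powSucc_succ, Set.pair_comm]
  exact span_insert_eq_span (smul_mem _ _ (mem_span_singleton_self _))

/-- `x` annihilates every grade from `A_{m+1}` on, so `A_{k+1} = A_1 ∘ A_k` is spanned by
`y ∘ A_k`. -/
theorem grade_eq_span_iterate {x y : A} (h1 : Ag 1 = span ℂ {x, y}) (hxx : M.mul x x ≠ 0)
    (hline2 : Module.finrank ℂ (Ag 2) = 1) {m : ℕ} (hm : 1 ≤ m)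
    (hline : Module.finrank ℂ (Ag (m + 1)) = 1) (hp : M.powSucc x m ≠ 0)
    (hp' : M.powSucc x (m + 1) = 0) (i : ℕ) (hit : m + 1 + i ≤ t) :
    Ag (m + 1 + i) = span ℂ {(M.mul y)^[i] (M.powSucc x m)} := by
  have hx : x ∈ Ag 1 := h1 ▸ subset_span (Set.mem_insert x {y})
  have hy : y ∈ Ag 1 := h1 ▸ subset_span (Set.mem_insert_of_mem x rfl)
  set w := M.powSucc x m
  have hspan : Ag (m + 1) = span ℂ {w} :=
    eq_span_singleton_of_mem_of_finrank_eq_one hline (hg.powSucc_mem hx m) hp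
  have hxw : M.mul x w = 0 := hp'
  have hwx : M.mul w x = 0 := by rw [powSucc_mul_self, hp', smul_zero]
  have hwy : M.mul w y = 0 := by
    obtain ⟨m, rfl⟩ := Nat.exists_eq_add_of_le' hm
    have hkill : ∀ z ∈ Ag (m + 2), M.mul x z = 0 := by
      intro z hz
      obtain ⟨c, rfl⟩ := mem_span_singleton.mp (hspan ▸ hz)
      rw [map_smul, hxw, smul_zero]
    have hpy := hg.mul_mem (m + 1) 1 _ y (hg.powSucc_mem hx m) hy
    have hyp := hg.mul_mem 1 (m + 1) y _ hy (hg.powSucc_mem hx m)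
    rw [add_comm] at hyp
    change M.mul (M.mul x (M.powSucc x m)) y = 0
    rw [M.zinbiel, hkill _ hpy, hkill _ hyp, add_zero]
  obtain ⟨c, hc⟩ := mem_span_singleton.mp <|
    eq_span_singleton_of_mem_of_finrank_eq_one hline2 (hg.mul_mem 1 1 x x hx hx) hxx ▸
      hg.mul_mem 1 1 x y hx hy
  induction i with
  | zero => exact hspan
  | succ i ih =>
    rw [← add_assoc, hg.grade_succ_eq_span_pair (k := m + 1 + i) h1 (by omega) (by omega)
      (ih (by omega)),
      (mul_iterate_mul_eq_zero hc.symm hxw hwx hwy i).1, Function.iterate_succ_apply',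
      span_insert_zero]

end IsNaturalGrading

/-- In a naturally graded quasi-filiform complex Zinbiel algebra of type `A_(r)`
with `r > 2`, every `x ∈ A_1` satisfies `x ∘ x = 0`. -/
theorem type_gt_two_square_zero {A : Type*} [AddCommGroup A] [Module ℂ A]
    [FiniteDimensional ℂ A] (M : ZinbielStr A) (n r : ℕ)
    (Ag : ℕ → Submodule ℂ A)
    (hqf : M.IsQuasiFiliform n) (hg : M.IsNaturalGrading (n - 2) Ag)
    (hr : 2 < r)
    (h1 : Module.finrank ℂ (Ag 1) = 2) (h2 : Module.finrank ℂ (Ag r) = 2) :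
    ∀ x ∈ Ag 1, M.mul x x = 0 := by
  obtain ⟨hA, hlcs, -⟩ := hqf
  have hrt : r ≤ n - 2 := hg.le_of_grade_ne_bot fun h => by
    have := finrank_eq_zero.mpr h
    omega
  have hline : ∀ k, 2 ≤ k → k ≤ n - 2 → k ≠ r → Module.finrank ℂ (Ag k) = 1 :=
    fun k => hg.finrank_grade_eq_one (by omega) hlcs (by omega) hrt h1 h2
  intro x hx
  by_contra hxx
  have hx0 : x ≠ 0 := by rintro rfl; simp at hxx
  obtain ⟨y, -, hxy⟩ := exists_eq_span_pair_of_finrank_eq_two h1 hx hx0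
  obtain ⟨j, rfl⟩ : ∃ j, r = j + 3 := ⟨r - 3, by omega⟩
  obtain ⟨v, hv⟩ : ∃ v, Ag (j + 3) = span ℂ {v} := by
    by_cases hp : M.powSucc x (j + 1) = 0
    · obtain ⟨m, hm1, hmj, hm, hm'⟩ := exists_powSucc_ne_zero_and_succ_eq_zero hxx hp
      obtain ⟨i, hi⟩ : ∃ i, j + 3 = m + 1 + i := ⟨j + 2 - m, by omega⟩
      exact ⟨_, hi ▸ hg.grade_eq_span_iterate hxy hxx (hline 2 le_rfl (by omega) (by omega)) hm1
        (hline (m + 1) (by omega) (by omega) (by omega)) hm hm' i (by omega)⟩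
    · exact ⟨_, hg.grade_eq_span_powSucc hxy (hline (j + 2) (by omega) (by omega) (by omega)) hp
        (by omega)⟩
  have := finrank_span_le_card (R := ℂ) ({v} : Set A)
  rw [← hv, h2] at this
  simp at this

end ZinbielStr
end
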